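/- For a deadlock-free tree automaton A and a labelled binary tree T, T is ε₀-accepted by A if and only if there exists a labelled binary tree T' that is accepted by A in the traditional (Boolean) sense and whose bisimulation distance to T is at most ε₀. -/
import Mathlib


open unitInterval

instance : Fact ((0:ℝ) ≤ 1) := ⟨zero_le_one⟩

/-- Finite binary strings. -/
abbrev Word := List Bool

/-- A set of words is prefix-closed. -/
def PrefixClosed (U : Set Word) : Prop :=
  ∀ ⦃w : Word⦄, w ∈ U → ∀ ⦃v : Word⦄, v <+: w → v ∈ U

/-- A set of words is sibling-closed. -/
def SiblingClosed (U : Set Word) : Prop :=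
  ∀ w : Word, w ++ [false] ∈ U ↔ w ++ [true] ∈ U

/-- The distance lifting of `d` along the binary-tree functor
`F X = S0 ⊕ S2 × X × X`, induced by `f`. -/
def dlift {S0 S2 X Y : Type*} [DecidableEq S0] [DecidableEq S2]
    (f : I → I → I) (d : X → Y → I) :
    (S0 ⊕ S2 × X × X) → (S0 ⊕ S2 × Y × Y) → I
  | Sum.inl s, Sum.inl t => if s = t then 0 else 1
  | Sum.inr (s, x1, x2), Sum.inr (t, y1, y2) =>
      if s = t then f (d x1 y1) (d x2 y2) else 1
  | _, _ => 1

/-- The relation lifting along the binary-tree functor. -/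
def rlift {S0 S2 X Y : Type*} (R : X → Y → Prop) :
    (S0 ⊕ S2 × X × X) → (S0 ⊕ S2 × Y × Y) → Prop
  | Sum.inl s, Sum.inl t => s = t
  | Sum.inr (s, x1, x2), Sum.inr (t, y1, y2) => s = t ∧ R x1 y1 ∧ R x2 y2
  | _, _ => False

/-- A labelled binary tree: a prefix- and sibling-closed domain of words
containing the root, together with its successor function
`γ : U → S0 ⊕ S2 × U × U` sending a branching node to its label and
its two children. -/
structure LTree (S0 S2 : Type*) where
  U : Set Word
  prefixClosed : PrefixClosed U
  siblingClosed : SiblingClosed U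
  rootMem : ([] : Word) ∈ U
  γ : U → S0 ⊕ S2 × U × U
  γ_children : ∀ (w : U) (s : S2) (l r : U),
      γ w = Sum.inr (s, l, r) →
      (l : Word) = (w : Word) ++ [false] ∧ (r : Word) = (w : Word) ++ [true]

/-- The root of a labelled binary tree, as an element of its domain. -/
def LTree.root {S0 S2 : Type*} (T : LTree S0 S2) : T.U := ⟨[], T.rootMem⟩

/-- `d` is a bisimulation distance function between `T` and `T'`:
`d(w,w') ≥ d̄(γ w, γ' w')` for all `w, w'`. -/
def IsBisimDist {S0 S2 : Type*} [DecidableEq S0] [DecidableEq S2]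
    (f : I → I → I) (T T' : LTree S0 S2) (d : T.U → T'.U → I) : Prop :=
  ∀ (w : T.U) (w' : T'.U), dlift f d (T.γ w) (T'.γ w') ≤ d w w'

/-- The bisimulation distance: the greatest post-fixpoint of the lifted
functional in the pointwise reverse order, i.e. (by the Knaster–Tarski
formula) the pointwise infimum of all bisimulation distance functions. -/
noncomputable def dstar {S0 S2 : Type*} [DecidableEq S0] [DecidableEq S2]
    (f : I → I → I) (T T' : LTree S0 S2) (w : T.U) (w' : T'.U) : I :=
  ⨅ d : {d : T.U → T'.U → I // IsBisimDist f T T' d}, d.1 w w'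

/-- Winning positions for Verifier in the bisimulation distance game:
`p` is winning iff it belongs to some set `S` of positions at each of which
Verifier has a valid move `d` (i.e. `d̄(γ w, γ' w') ≤ ε`) all of whose
Falsifier responses `(v,v',ε')` with `d v v' ≤ ε'` stay in `S`
(stuck players lose, infinite plays are won by Verifier). -/
def BDWin {S0 S2 : Type*} [DecidableEq S0] [DecidableEq S2]
    (f : I → I → I) (T T' : LTree S0 S2) (p : T.U × T'.U × I) : Prop :=
  ∃ S : Set (T.U × T'.U × I), p ∈ S ∧
    ∀ q ∈ S, ∃ d : T.U → T'.U → I,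
      dlift f d (T.γ q.1) (T'.γ q.2.1) ≤ q.2.2 ∧
      ∀ (v : T.U) (v' : T'.U) (ε' : I), d v v' ≤ ε' → (v, v', ε') ∈ S

/-- A nondeterministic tree automaton (with acceptance condition `Acc = A^ω`,
i.e. every infinite run accepted). -/
structure NTA (S0 S2 : Type*) where
  A : Type*
  a0 : A
  Δ : A → Set (S0 ⊕ S2 × A × A)

/-- Deadlock freeness: every state has at least one transition. -/
def NTA.DeadlockFree {S0 S2 : Type*} (𝔸 : NTA S0 S2) : Prop :=
  ∀ a : 𝔸.A, (𝔸.Δ a).Nonempty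

/-- Winning positions for Verifier in the (Boolean) acceptance game:
at `(a,w)` Verifier picks `δa ∈ Δ a` and a relation `R` with
`(δa, γ w) ∈ R̄`; Falsifier picks an element of `R`; infinite plays are won
by Verifier. -/
def AccWin {S0 S2 : Type*} (𝔸 : NTA S0 S2) (T : LTree S0 S2)
    (p : 𝔸.A × T.U) : Prop :=
  ∃ S : Set (𝔸.A × T.U), p ∈ S ∧
    ∀ q ∈ S, ∃ δa ∈ 𝔸.Δ q.1, ∃ R : 𝔸.A → T.U → Prop,
      rlift R δa (T.γ q.2) ∧ ∀ (b : 𝔸.A) (v : T.U), R b v → (b, v) ∈ S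

/-- Winning positions for Verifier in the ε-acceptance game:
at `(a,w,ε)` Verifier picks `δa ∈ Δ a` and `d : A × U → [0,1]` with
`d̄(δa, γ w) ≤ ε`; Falsifier picks `(b,v,ε')` with `d b v ≤ ε'`;
infinite plays are won by Verifier. -/
def EAccWin {S0 S2 : Type*} [DecidableEq S0] [DecidableEq S2]
    (f : I → I → I) (𝔸 : NTA S0 S2) (T : LTree S0 S2)
    (p : 𝔸.A × T.U × I) : Prop :=
  ∃ S : Set (𝔸.A × T.U × I), p ∈ S ∧
    ∀ q ∈ S, ∃ δa ∈ 𝔸.Δ q.1, ∃ d : 𝔸.A → T.U → I,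
      dlift f d δa (T.γ q.2.1) ≤ q.2.2 ∧
      ∀ (b : 𝔸.A) (v : T.U) (ε' : I), d b v ≤ ε' → (b, v, ε') ∈ S

section AuxLemmas

open unitInterval

variable {S0 S2 X Y : Type*} [DecidableEq S0] [DecidableEq S2]

@[simp] lemma dlift_inl_inl (f : I → I → I) (d : X → Y → I) (s t : S0) :
    dlift (S2 := S2) f d (Sum.inl s) (Sum.inl t) = if s = t then 0 else 1 := rfl

@[simp] lemma dlift_inl_inr (f : I → I → I) (d : X → Y → I) (s : S0) (t : S2) (y1 y2 : Y) :
    dlift f d (Sum.inl s) (Sum.inr (t, y1, y2)) = 1 := rfl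

@[simp] lemma dlift_inr_inl (f : I → I → I) (d : X → Y → I) (s : S2) (x1 x2 : X) (t : S0) :
    dlift f d (Sum.inr (s, x1, x2)) (Sum.inl t) = 1 := rfl

@[simp] lemma dlift_inr_inr (f : I → I → I) (d : X → Y → I) (s t : S2)
    (x1 x2 : X) (y1 y2 : Y) :
    dlift (S0 := S0) f d (Sum.inr (s, x1, x2)) (Sum.inr (t, y1, y2)) =
      if s = t then f (d x1 y1) (d x2 y2) else 1 := rfl

lemma dlift_le_one (f : I → I → I) (d : X → Y → I)
    (a : S0 ⊕ S2 × X × X) (b : S0 ⊕ S2 × Y × Y) : dlift f d a b ≤ 1 := by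
  rcases a with s | ⟨s, x1, x2⟩ <;> rcases b with t | ⟨t, y1, y2⟩ <;>
    simp only [dlift] <;>
    first
      | exact le_one'
      | (split <;> exact le_one')

lemma dlift_mono (f : I → I → I)
    (hf : ∀ x x' y y' : I, x ≤ x' → y ≤ y' → f x y ≤ f x' y')
    {d d' : X → Y → I} (h : ∀ x y, d x y ≤ d' x y)
    (a : S0 ⊕ S2 × X × X) (b : S0 ⊕ S2 × Y × Y) :
    dlift f d a b ≤ dlift f d' a b := by
  rcases a with s | ⟨s, x1, x2⟩ <;> rcases b with t | ⟨t, y1, y2⟩ <;>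
    simp only [dlift] <;>
    first
      | exact le_refl _
      | (split <;> [exact hf _ _ _ _ (h _ _) (h _ _); exact le_refl _])

lemma isBisimDist_dstar (f : I → I → I)
    (hf : ∀ x x' y y' : I, x ≤ x' → y ≤ y' → f x y ≤ f x' y')
    (T T' : LTree S0 S2) : IsBisimDist f T T' (dstar f T T') := by
  intro w w'
  show dlift f (dstar f T T') (T.γ w) (T'.γ w') ≤
    ⨅ d : {d : T.U → T'.U → I // IsBisimDist f T T' d}, d.1 w w'
  refine le_iInf fun d => ?_
  exact le_trans (dlift_mono f hf (fun x y => iInf_le _ d) _ _) (d.2 w w')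

lemma dstar_le (f : I → I → I) (T T' : LTree S0 S2) (d : T.U → T'.U → I)
    (hd : IsBisimDist f T T' d) (w : T.U) (w' : T'.U) :
    dstar f T T' w w' ≤ d w w' :=
  iInf_le (fun d : {d : T.U → T'.U → I // IsBisimDist f T T' d} => d.1 w w') ⟨d, hd⟩

end AuxLemmas
section Construction

open unitInterval

variable {S0 S2 : Type*} [DecidableEq S0] [DecidableEq S2]
variable (𝔸 : NTA S0 S2) (T : LTree S0 S2)
variable (σδ : 𝔸.A × T.U × I → S0 ⊕ S2 × 𝔸.A × 𝔸.A)
variable (σd : 𝔸.A × T.U × I → 𝔸.A → T.U → I)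
variable (p0 : 𝔸.A × T.U × I)

/-- The `T`-node children of a node (the node itself below a leaf). -/
def childT (w : T.U) (c : Bool) : T.U :=
  match T.γ w with
  | Sum.inl _ => w
  | Sum.inr (_, l, r) => if c then r else l

/-- The next game position after Falsifier picks direction `c`. -/
def child (q : 𝔸.A × T.U × I) (c : Bool) : 𝔸.A × T.U × I :=
  match σδ q with
  | Sum.inl _ => q
  | Sum.inr (_, b1, b2) =>
      ((if c then b2 else b1), childT T q.2.1 c,
        σd q (if c then b2 else b1) (childT T q.2.1 c))

/-- The game position reached along the reversed word. -/
def runPos : Word → 𝔸.A × T.U × I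
  | [] => p0
  | c :: v => child 𝔸 T σδ σd (runPos v) c

lemma runPos_append (w : Word) (c : Bool) :
    runPos 𝔸 T σδ σd p0 ((w ++ [c]).reverse) =
      child 𝔸 T σδ σd (runPos 𝔸 T σδ σd p0 w.reverse) c := by
  rw [List.reverse_append]; rfl

/-- The run tree of the strategy `(σδ, σd)` from position `p0`. -/
def mkTree : LTree S0 S2 where
  U := Set.univ
  prefixClosed := fun _ _ _ _ => Set.mem_univ _
  siblingClosed := fun _ => Iff.rfl
  rootMem := Set.mem_univ _
  γ := fun w =>
    match σδ (runPos 𝔸 T σδ σd p0 w.1.reverse) with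
    | Sum.inl s => Sum.inl s
    | Sum.inr (s, _, _) =>
        Sum.inr (s, ⟨w.1 ++ [false], Set.mem_univ _⟩, ⟨w.1 ++ [true], Set.mem_univ _⟩)
  γ_children := by
    intro w s l r h
    rcases hδ : σδ (runPos 𝔸 T σδ σd p0 w.1.reverse) with s' | ⟨s', b1, b2⟩ <;>
      rw [hδ] at h
    · exact absurd h (by simp)
    · simp only [Sum.inr.injEq, Prod.mk.injEq] at h
      obtain ⟨-, hl, hr⟩ := h
      exact ⟨by rw [← hl], by rw [← hr]⟩

lemma mkTree_γ_inl {w : (mkTree 𝔸 T σδ σd p0).U} {s : S0}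
    (h : σδ (runPos 𝔸 T σδ σd p0 w.1.reverse) = Sum.inl s) :
    (mkTree 𝔸 T σδ σd p0).γ w = Sum.inl s := by
  simp only [mkTree]
  rw [h]

lemma mkTree_γ_inr {w : (mkTree 𝔸 T σδ σd p0).U} {s : S2} {b1 b2 : 𝔸.A}
    (h : σδ (runPos 𝔸 T σδ σd p0 w.1.reverse) = Sum.inr (s, b1, b2)) :
    (mkTree 𝔸 T σδ σd p0).γ w =
      Sum.inr (s, ⟨w.1 ++ [false], Set.mem_univ _⟩, ⟨w.1 ++ [true], Set.mem_univ _⟩) := by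
  simp only [mkTree]
  rw [h]

end Construction
section MainLemmas

open unitInterval

variable {S0 S2 : Type*} [DecidableEq S0] [DecidableEq S2]
variable (f : I → I → I) (𝔸 : NTA S0 S2) (T : LTree S0 S2)
variable (σδ : 𝔸.A × T.U × I → S0 ⊕ S2 × 𝔸.A × 𝔸.A)
variable (σd : 𝔸.A × T.U × I → 𝔸.A → T.U → I)
variable (p0 : 𝔸.A × T.U × I)
variable {S : Set (𝔸.A × T.U × I)}

lemma runPos_mem (hp0 : p0 ∈ S)
    (hclose : ∀ q ∈ S, ∀ (b : 𝔸.A) (v : T.U) (ε' : I), σd q b v ≤ ε' → (b, v, ε') ∈ S) :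
    ∀ v : Word, runPos 𝔸 T σδ σd p0 v ∈ S := by
  intro v
  induction v with
  | nil => exact hp0
  | cons c v ih =>
    show child 𝔸 T σδ σd (runPos 𝔸 T σδ σd p0 v) c ∈ S
    rcases hδ : σδ (runPos 𝔸 T σδ σd p0 v) with s | ⟨s, b1, b2⟩ <;>
      simp only [child, hδ]
    · exact ih
    · exact hclose _ ih _ _ _ le_rfl

lemma mkTree_accWin (hp0 : p0 ∈ S)
    (hmem : ∀ q ∈ S, σδ q ∈ 𝔸.Δ q.1)
    (hclose : ∀ q ∈ S, ∀ (b : 𝔸.A) (v : T.U) (ε' : I), σd q b v ≤ ε' → (b, v, ε') ∈ S) :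
    AccWin 𝔸 (mkTree 𝔸 T σδ σd p0) (p0.1, (mkTree 𝔸 T σδ σd p0).root) := by
  refine ⟨{p | p.1 = (runPos 𝔸 T σδ σd p0 p.2.1.reverse).1}, rfl, ?_⟩
  rintro ⟨a, w⟩ hq
  have hq' : a = (runPos 𝔸 T σδ σd p0 w.1.reverse).1 := hq
  have hS : runPos 𝔸 T σδ σd p0 w.1.reverse ∈ S :=
    runPos_mem 𝔸 T σδ σd p0 hp0 hclose _
  rcases hδ : σδ (runPos 𝔸 T σδ σd p0 w.1.reverse) with s | ⟨s, b1, b2⟩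
  · refine ⟨Sum.inl s, ?_, fun _ _ => False, ?_, fun b v h => h.elim⟩
    · rw [hq']; exact hδ ▸ hmem _ hS
    · rw [mkTree_γ_inl 𝔸 T σδ σd p0 hδ]
      exact rfl
  · refine ⟨Sum.inr (s, b1, b2), ?_,
      fun b v => b = (runPos 𝔸 T σδ σd p0 v.1.reverse).1, ?_, fun b v h => h⟩
    · rw [hq']; exact hδ ▸ hmem _ hS
    · rw [mkTree_γ_inr 𝔸 T σδ σd p0 hδ]
      refine ⟨rfl, ?_, ?_⟩
      · show b1 = (runPos 𝔸 T σδ σd p0 (w.1 ++ [false]).reverse).1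
        rw [runPos_append]
        simp [child, hδ]
      · show b2 = (runPos 𝔸 T σδ σd p0 (w.1 ++ [true]).reverse).1
        rw [runPos_append]
        simp [child, hδ]

open Classical in
/-- The distance witness between the run tree and `T`. -/
noncomputable def mkDist (w' : (mkTree 𝔸 T σδ σd p0).U) (v : T.U) : I :=
  if v = (runPos 𝔸 T σδ σd p0 w'.1.reverse).2.1
  then (runPos 𝔸 T σδ σd p0 w'.1.reverse).2.2 else 1

lemma mkTree_bisim (hp0 : p0 ∈ S)
    (hle : ∀ q ∈ S, dlift f (σd q) (σδ q) (T.γ q.2.1) ≤ q.2.2)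
    (hclose : ∀ q ∈ S, ∀ (b : 𝔸.A) (v : T.U) (ε' : I), σd q b v ≤ ε' → (b, v, ε') ∈ S) :
    IsBisimDist f (mkTree 𝔸 T σδ σd p0) T (mkDist 𝔸 T σδ σd p0) := by
  intro w' v
  by_cases hv : v = (runPos 𝔸 T σδ σd p0 w'.1.reverse).2.1
  case neg =>
    have : mkDist 𝔸 T σδ σd p0 w' v = 1 := by rw [mkDist, if_neg hv]
    rw [this]
    exact dlift_le_one f _ _ _
  case pos =>
  have hD : mkDist 𝔸 T σδ σd p0 w' v = (runPos 𝔸 T σδ σd p0 w'.1.reverse).2.2 := by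
    rw [mkDist, if_pos hv]
  rw [hD]
  have hS : runPos 𝔸 T σδ σd p0 w'.1.reverse ∈ S :=
    runPos_mem 𝔸 T σδ σd p0 hp0 hclose _
  have hstrat := hle _ hS
  rw [← hv] at hstrat
  rcases hδ : σδ (runPos 𝔸 T σδ σd p0 w'.1.reverse) with s | ⟨s, b1, b2⟩ <;>
    rw [hδ] at hstrat
  · rw [mkTree_γ_inl 𝔸 T σδ σd p0 hδ]
    rcases hγ : T.γ v with u | ⟨u, c1, c2⟩ <;> rw [hγ] at hstrat
    · simpa using hstrat
    · simpa using hstrat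
  · rw [mkTree_γ_inr 𝔸 T σδ σd p0 hδ]
    rcases hγ : T.γ v with u | ⟨u, c1, c2⟩ <;> rw [hγ] at hstrat
    · simpa using hstrat
    · rcases ne_or_eq s u with hsu | hsu
      · rw [dlift_inr_inr, if_neg hsu]
        rw [dlift_inr_inr, if_neg hsu] at hstrat
        exact hstrat
      rw [dlift_inr_inr, if_pos hsu]
      rw [dlift_inr_inr, if_pos hsu] at hstrat
      -- compute children positions
      have hcf : child 𝔸 T σδ σd (runPos 𝔸 T σδ σd p0 w'.1.reverse) false =
          (b1, c1, σd (runPos 𝔸 T σδ σd p0 w'.1.reverse) b1 c1) := by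
        simp only [child, hδ]
        have hct : childT T (runPos 𝔸 T σδ σd p0 w'.1.reverse).2.1 false = c1 := by
          rw [← hv]; simp [childT, hγ]
        simp [hct]
      have hct : child 𝔸 T σδ σd (runPos 𝔸 T σδ σd p0 w'.1.reverse) true =
          (b2, c2, σd (runPos 𝔸 T σδ σd p0 w'.1.reverse) b2 c2) := by
        simp only [child, hδ]
        have hctt : childT T (runPos 𝔸 T σδ σd p0 w'.1.reverse).2.1 true = c2 := by
          rw [← hv]; simp [childT, hγ]
        simp [hctt]
      have h1 : mkDist 𝔸 T σδ σd p0 ⟨w'.1 ++ [false], Set.mem_univ _⟩ c1 =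
          σd (runPos 𝔸 T σδ σd p0 w'.1.reverse) b1 c1 := by
        rw [mkDist]
        have : runPos 𝔸 T σδ σd p0 ((⟨w'.1 ++ [false], Set.mem_univ _⟩ :
            (mkTree 𝔸 T σδ σd p0).U) : Word).reverse =
            (b1, c1, σd (runPos 𝔸 T σδ σd p0 w'.1.reverse) b1 c1) := by
          rw [runPos_append 𝔸 T σδ σd p0 w'.1 false, hcf]
        rw [this, if_pos rfl]
      have h2 : mkDist 𝔸 T σδ σd p0 ⟨w'.1 ++ [true], Set.mem_univ _⟩ c2 =
          σd (runPos 𝔸 T σδ σd p0 w'.1.reverse) b2 c2 := by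
        rw [mkDist]
        have : runPos 𝔸 T σδ σd p0 ((⟨w'.1 ++ [true], Set.mem_univ _⟩ :
            (mkTree 𝔸 T σδ σd p0).U) : Word).reverse =
            (b2, c2, σd (runPos 𝔸 T σδ σd p0 w'.1.reverse) b2 c2) := by
          rw [runPos_append 𝔸 T σδ σd p0 w'.1 true, hct]
        rw [this, if_pos rfl]
      rw [h1, h2]
      exact hstrat

end MainLemmas
/-- Main theorem: for a deadlock-free tree automaton `𝔸` and a labelled binary
tree `T`, `T` is ε₀-accepted by `𝔸` iff there is a labelled binary tree `T'`
accepted by `𝔸` in the Boolean sense with bisimulation distance at most `ε₀`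
to `T`. -/
theorem stmt16 {S0 S2 : Type*} [DecidableEq S0] [DecidableEq S2]
    (f : I → I → I)
    (hf : ∀ x x' y y' : I, x ≤ x' → y ≤ y' → f x y ≤ f x' y')
    (𝔸 : NTA S0 S2) (hdf : 𝔸.DeadlockFree) (T : LTree S0 S2) (ε0 : I) :
    EAccWin f 𝔸 T (𝔸.a0, T.root, ε0) ↔
      ∃ T' : LTree S0 S2, AccWin 𝔸 T' (𝔸.a0, T'.root) ∧
        dstar f T' T T'.root T.root ≤ ε0 := by
  constructor
  · -- forward: from an ε-acceptance winning set, build the run tree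
    rintro ⟨S, hp0S, hstrat⟩
    have hch : ∀ q : 𝔸.A × T.U × I, ∃ δd : (S0 ⊕ S2 × 𝔸.A × 𝔸.A) × (𝔸.A → T.U → I),
        q ∈ S → δd.1 ∈ 𝔸.Δ q.1 ∧ dlift f δd.2 δd.1 (T.γ q.2.1) ≤ q.2.2 ∧
          ∀ (b : 𝔸.A) (v : T.U) (ε' : I), δd.2 b v ≤ ε' → (b, v, ε') ∈ S := by
      intro q
      by_cases hq : q ∈ S
      · obtain ⟨δa, h1, d, h2, h3⟩ := hstrat q hq
        exact ⟨(δa, d), fun _ => ⟨h1, h2, h3⟩⟩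
      · exact ⟨((hdf q.1).choose, fun _ _ => 1), fun h => absurd h hq⟩
    choose σδd hσ using hch
    set σδ : 𝔸.A × T.U × I → S0 ⊕ S2 × 𝔸.A × 𝔸.A := fun q => (σδd q).1 with hσδ
    set σd : 𝔸.A × T.U × I → 𝔸.A → T.U → I := fun q => (σδd q).2 with hσd
    have hmem : ∀ q ∈ S, σδ q ∈ 𝔸.Δ q.1 := fun q hq => (hσ q hq).1
    have hle : ∀ q ∈ S, dlift f (σd q) (σδ q) (T.γ q.2.1) ≤ q.2.2 :=
      fun q hq => (hσ q hq).2.1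
    have hclose : ∀ q ∈ S, ∀ (b : 𝔸.A) (v : T.U) (ε' : I),
        σd q b v ≤ ε' → (b, v, ε') ∈ S := fun q hq => (hσ q hq).2.2
    refine ⟨mkTree 𝔸 T σδ σd (𝔸.a0, T.root, ε0), ?_, ?_⟩
    · exact mkTree_accWin 𝔸 T σδ σd (𝔸.a0, T.root, ε0) hp0S hmem hclose
    · have hbis := mkTree_bisim f 𝔸 T σδ σd (𝔸.a0, T.root, ε0) hp0S hle hclose
      refine le_trans (dstar_le f _ T _ hbis _ T.root) ?_
      have : mkDist 𝔸 T σδ σd (𝔸.a0, T.root, ε0)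
          (mkTree 𝔸 T σδ σd (𝔸.a0, T.root, ε0)).root T.root = ε0 := by
        rw [mkDist]
        exact if_pos rfl
      rw [this]
  · -- backward: simulate the Boolean acceptance game up to distance ε0
    rintro ⟨T', ⟨S', hrS', hstrat'⟩, hdist⟩
    classical
    have hstar : IsBisimDist f T' T (dstar f T' T) := isBisimDist_dstar f hf T' T
    refine ⟨{p | (1:I) ≤ p.2.2 ∨
        ∃ w' : T'.U, (p.1, w') ∈ S' ∧ dstar f T' T w' p.2.1 ≤ p.2.2},
      Or.inr ⟨T'.root, hrS', hdist⟩, ?_⟩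
    rintro ⟨a, w, ε⟩ (h1 | ⟨w', hw'S, hdw⟩)
    · obtain ⟨δa, hδa⟩ := hdf a
      exact ⟨δa, hδa, fun _ _ => 1, le_trans (dlift_le_one f _ _ _) h1,
        fun b v ε' h => Or.inl h⟩
    · obtain ⟨δa, hδa, R, hR, hRcl⟩ := hstrat' (a, w') hw'S
      have hKey : dlift f (dstar f T' T) (T'.γ w') (T.γ w) ≤ ε :=
        le_trans (hstar w' w) hdw
      rcases hδ : δa with s | ⟨s, b1, b2⟩ <;> rw [hδ] at hR hδa
      · -- a leaf transition
        rcases hγ' : T'.γ w' with t | ⟨t, l', r'⟩ <;> rw [hγ'] at hR hKey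
        · have hst : s = t := hR
          subst hst
          refine ⟨Sum.inl s, hδa, fun _ _ => 1, ?_, fun b v ε' h => Or.inl h⟩
          rcases hγ : T.γ w with u | ⟨u, c1, c2⟩ <;> rw [hγ] at hKey
          · simpa using hKey
          · simpa using hKey
        · exact absurd hR (by simp [rlift])
      · -- a branching transition
        rcases hγ' : T'.γ w' with t | ⟨t, l', r'⟩ <;> rw [hγ'] at hR hKey
        · exact absurd hR (by simp [rlift])
        obtain ⟨hst, hRl, hRr⟩ := hR
        subst hst
        rcases hγ : T.γ w with u | ⟨u, c1, c2⟩ <;> rw [hγ] at hKey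
        · -- tree node is a leaf: distance is 1
          have h1 : (1:I) ≤ ε := by simpa using hKey
          refine ⟨Sum.inr (s, b1, b2), hδa, fun _ _ => 1, ?_, fun b v ε' h => Or.inl h⟩
          simpa using h1
        · rcases ne_or_eq s u with hsu | hsu
          · -- labels differ: distance is 1
            rw [dlift_inr_inr, if_neg hsu] at hKey
            refine ⟨Sum.inr (s, b1, b2), hδa, fun _ _ => 1, ?_,
              fun b v ε' h => Or.inl h⟩
            rw [dlift_inr_inr, if_neg hsu]
            exact hKey
          · subst hsu
            rw [dlift_inr_inr, if_pos rfl] at hKey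
            refine ⟨Sum.inr (s, b1, b2), hδa,
              fun b v => min (if b = b1 ∧ v = c1 then dstar f T' T l' c1 else 1)
                             (if b = b2 ∧ v = c2 then dstar f T' T r' c2 else 1),
              ?_, ?_⟩
            · rw [dlift_inr_inr, if_pos rfl]
              refine le_trans (hf _ _ _ _ ?_ ?_) hKey
              · exact le_trans (min_le_left _ _) (le_of_eq (if_pos ⟨rfl, rfl⟩))
              · exact le_trans (min_le_right _ _) (le_of_eq (if_pos ⟨rfl, rfl⟩))
            · intro b v ε' hlemin
              rcases min_le_iff.mp hlemin with h | h
              · by_cases hc : b = b1 ∧ v = c1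
                · rw [if_pos hc] at h
                  obtain ⟨hb, hv⟩ := hc
                  subst hb; subst hv
                  exact Or.inr ⟨l', hRcl _ _ hRl, h⟩
                · rw [if_neg hc] at h
                  exact Or.inl h
              · by_cases hc : b = b2 ∧ v = c2
                · rw [if_pos hc] at h
                  obtain ⟨hb, hv⟩ := hc
                  subst hb; subst hv
                  exact Or.inr ⟨r', hRcl _ _ hRr, h⟩
                · rw [if_neg hc] at h
                  exact Or.inl h
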